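/- arXiv:1008.5291 — 2 statements merged into one kernel-verified Lean document; each statement's English description precedes it below -/
import Mathlib

section
/- Let w : ℤ^r → ℤ^r be the linear map sending α_k to e_k - e_{k+1} for 1 ≤ k ≤ r-1 and α_r to 2e_r, where e_1,…,e_r is the standard basis. Then w maps Ψ_{r,Y} bijectively onto the set {e_i - e_j : 1 ≤ i < j ≤ r} ∪ {e_i + e_j : 1 ≤ i < j ≤ r} ∪ {2e_r} ∪ {2e_j : j ∈ Y}. -/
/-- The standard basis vector `α_i` of `ℤ^r` (1-indexed). -/
def alphaV (r i : ℕ) : Fin r → ℤ := fun k => if (k : ℕ) + 1 = i then 1 else 0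

/-- `η_{i,j} = α_i + ⋯ + α_j` for `i ≤ j`, and `0` for `i > j` (1-indexed). -/
def eta (r i j : ℕ) : Fin r → ℤ := fun k => if i ≤ (k : ℕ) + 1 ∧ (k : ℕ) + 1 ≤ j then 1 else 0

/-- The root set `Φ_{r,Z}`. -/
def Phi (r : ℕ) (Z : Finset ℕ) : Set (Fin r → ℤ) :=
  {v | ∃ i j, 1 ≤ i ∧ i < j ∧ j ≤ r ∧ v = eta r i (j - 1)} ∪
  {v | ∃ i, 1 ≤ i ∧ i < r ∧ v = eta r i (r - 2) + alphaV r r} ∪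
  {v | ∃ i j, 1 ≤ i ∧ i < j ∧ j < r ∧ v = eta r i r + eta r j (r - 2)} ∪
  {v | ∃ j ∈ Z, v = eta r j r + eta r j (r - 2)}

/-- The root set `Ψ_{r,Y}`. -/
def Psi (r : ℕ) (Y : Finset ℕ) : Set (Fin r → ℤ) :=
  {v | ∃ i j, 1 ≤ i ∧ i ≤ j ∧ j ≤ r ∧ v = eta r i j} ∪
  {v | ∃ i j, 1 ≤ i ∧ i < j ∧ j < r ∧ v = eta r i r + eta r j (r - 1)} ∪
  {v | ∃ j ∈ Y, v = eta r j r + eta r j (r - 1)}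

/-!
The map `w` telescopes on `η_{i,j} = α_i + ⋯ + α_j`: `w η_{i,j} = e_i - e_{j+1}` for `j < r`,
and, as `w α_r = 2 e_r`, `w η_{i,r} = e_i + e_r`. Hence `w (η_{i,r} + η_{j,r-1}) = e_i + e_j`,
which gives every target vector an explicit preimage in `Ψ_{r,Y}`. For injectivity, the case
`i = j` says that `u : e_k ↦ η_{k,r} + η_{k,r-1}` satisfies `w ∘ u = 2`, so `det w ≠ 0`.
In the code both `e_k` and `α_k` are `alphaV r k`.
-/

open Finset

theorem LinearMap.injective_of_comp_eq_smul {ι R : Type*} [Fintype ι] [DecidableEq ι]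
    [CommRing R] [IsDomain R] {f g : (ι → R) →ₗ[R] ι → R} {c : R} (hc : c ≠ 0)
    (hfg : f ∘ₗ g = c • LinearMap.id) : Function.Injective f := by
  have hdet : (LinearMap.toMatrix' f).det ≠ 0 := by
    rw [LinearMap.det_toMatrix']
    intro hf
    have := congrArg LinearMap.det hfg
    rw [LinearMap.det_comp, hf, zero_mul, LinearMap.det_smul, LinearMap.det_id, mul_one] at this
    exact pow_ne_zero _ hc this.symm
  exact fun x y hxy => Matrix.mulVec_injective_of_det_ne_zero hdet <| by
    simpa only [LinearMap.toMatrix'_mulVec] using hxy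

lemma eta_eq_sum_Ico (r i j : ℕ) : eta r i j = ∑ k ∈ Ico i (j + 1), alphaV r k := by
  funext m
  simp only [eta, alphaV, Finset.sum_apply, sum_ite_eq, mem_Ico]
  split_ifs <;> omega

lemma eta_top_eq_add {r i : ℕ} (hi : i ≤ r) : eta r i r = eta r i (r - 1) + alphaV r r := by
  funext m
  have := m.isLt
  simp only [eta, alphaV, Pi.add_apply]
  split_ifs <;> omega

lemma alphaV_succ_eq_single {r : ℕ} (k : Fin r) : alphaV r (k + 1) = Pi.single k 1 := by
  funext m
  simp [alphaV, Pi.single_apply, Fin.ext_iff]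

def rootsC (r : ℕ) (Y : Finset ℕ) : Set (Fin r → ℤ) :=
  {v | ∃ i j, 1 ≤ i ∧ i < j ∧ j ≤ r ∧ v = alphaV r i - alphaV r j} ∪
  {v | ∃ i j, 1 ≤ i ∧ i < j ∧ j ≤ r ∧ v = alphaV r i + alphaV r j} ∪
  {(2 : ℤ) • alphaV r r} ∪
  {v | ∃ j ∈ Y, v = (2 : ℤ) • alphaV r j}

section
variable {r : ℕ} {Y : Finset ℕ} {w : (Fin r → ℤ) →ₗ[ℤ] (Fin r → ℤ)}

lemma map_eta_of_lt
    (hw1 : ∀ k, 1 ≤ k → k ≤ r - 1 → w (alphaV r k) = alphaV r k - alphaV r (k + 1))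
    {i j : ℕ} (hi : 1 ≤ i) (hij : i ≤ j + 1) (hj : j < r) :
    w (eta r i j) = alphaV r i - alphaV r (j + 1) :=
  calc w (eta r i j) = ∑ k ∈ Ico i (j + 1), (alphaV r k - alphaV r (k + 1)) := by
        rw [eta_eq_sum_Ico, map_sum]
        exact sum_congr rfl fun k hk => hw1 k (by grind) (by grind)
    _ = alphaV r i - alphaV r (j + 1) := by
        rw [← neg_sub, ← sum_Ico_sub (alphaV r) hij, ← sum_neg_distrib]
        simp only [neg_sub]

lemma map_eta_top
    (hw1 : ∀ k, 1 ≤ k → k ≤ r - 1 → w (alphaV r k) = alphaV r k - alphaV r (k + 1))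
    (hw2 : w (alphaV r r) = (2 : ℤ) • alphaV r r) {i : ℕ} (hi : 1 ≤ i) (hir : i ≤ r) :
    w (eta r i r) = alphaV r i + alphaV r r := by
  rw [eta_top_eq_add hir, map_add, map_eta_of_lt hw1 hi (by omega) (by omega),
    Nat.sub_add_cancel (by omega), hw2, two_smul]
  abel

lemma map_eta_top_add_eta
    (hw1 : ∀ k, 1 ≤ k → k ≤ r - 1 → w (alphaV r k) = alphaV r k - alphaV r (k + 1))
    (hw2 : w (alphaV r r) = (2 : ℤ) • alphaV r r) {i j : ℕ} (hi : 1 ≤ i) (hir : i ≤ r)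
    (hj : 1 ≤ j) (hjr : j ≤ r) : w (eta r i r + eta r j (r - 1)) = alphaV r i + alphaV r j := by
  rw [map_add, map_eta_top hw1 hw2 hi hir, map_eta_of_lt hw1 hj (by omega) (by omega),
    Nat.sub_add_cancel (by omega)]
  abel

lemma injective_of_map_alphaV
    (hw1 : ∀ k, 1 ≤ k → k ≤ r - 1 → w (alphaV r k) = alphaV r k - alphaV r (k + 1))
    (hw2 : w (alphaV r r) = (2 : ℤ) • alphaV r r) : Function.Injective w := by
  let u := (Pi.basisFun ℤ (Fin r)).constr ℤ fun k => eta r (k + 1) r + eta r (k + 1) (r - 1)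
  refine LinearMap.injective_of_comp_eq_smul (g := u) two_ne_zero <|
    (Pi.basisFun ℤ (Fin r)).ext fun k => ?_
  rw [LinearMap.comp_apply, Module.Basis.constr_basis,
    map_eta_top_add_eta hw1 hw2 (by omega) k.isLt (by omega) k.isLt, Pi.basisFun_apply,
    alphaV_succ_eq_single, LinearMap.smul_apply, LinearMap.id_apply, two_smul]

lemma mapsTo_Psi_rootsC (hY : Y ⊆ Icc 1 (r - 1))
    (hw1 : ∀ k, 1 ≤ k → k ≤ r - 1 → w (alphaV r k) = alphaV r k - alphaV r (k + 1))
    (hw2 : w (alphaV r r) = (2 : ℤ) • alphaV r r) : Set.MapsTo w (Psi r Y) (rootsC r Y) := by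
  rintro v ((⟨i, j, hi, hij, hjr, rfl⟩ | ⟨i, j, hi, hij, hjr, rfl⟩) | ⟨j, hjY, rfl⟩)
  · obtain hjr | rfl := hjr.lt_or_eq.imp_right Eq.symm
    · exact .inl <| .inl <| .inl
        ⟨i, j + 1, hi, by omega, hjr, map_eta_of_lt hw1 hi (by omega) hjr⟩
    obtain hij | rfl := hij.lt_or_eq.imp_right Eq.symm
    · exact .inl <| .inl <| .inr ⟨i, r, hi, hij, le_rfl, map_eta_top hw1 hw2 hi hij.le⟩
    · exact .inl <| .inr <| (map_eta_top hw1 hw2 hi le_rfl).trans (two_smul ℤ _).symm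
  · exact .inl <| .inl <| .inr
      ⟨i, j, hi, hij, hjr.le, map_eta_top_add_eta hw1 hw2 hi (by omega) (by omega) hjr.le⟩
  · obtain ⟨hj, hjr⟩ := mem_Icc.mp (hY hjY)
    exact .inr ⟨j, hjY,
      by rw [map_eta_top_add_eta hw1 hw2 hj (by omega) hj (by omega), two_smul]⟩

lemma surjOn_Psi_rootsC (hr : 1 ≤ r) (hY : Y ⊆ Icc 1 (r - 1))
    (hw1 : ∀ k, 1 ≤ k → k ≤ r - 1 → w (alphaV r k) = alphaV r k - alphaV r (k + 1))
    (hw2 : w (alphaV r r) = (2 : ℤ) • alphaV r r) : Set.SurjOn w (Psi r Y) (rootsC r Y) := by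
  have eta_mem {i j : ℕ} (hi : 1 ≤ i) (hij : i ≤ j) (hjr : j ≤ r) : eta r i j ∈ Psi r Y :=
    .inl <| .inl ⟨i, j, hi, hij, hjr, rfl⟩
  rintro v
    (((⟨i, j, hi, hij, hjr, rfl⟩ | ⟨i, j, hi, hij, hjr, rfl⟩) | rfl) | ⟨j, hjY, rfl⟩)
  · refine ⟨eta r i (j - 1), eta_mem hi (by omega) (by omega), ?_⟩
    rw [map_eta_of_lt hw1 hi (by omega) (by omega), Nat.sub_add_cancel (by omega)]
  · obtain hjr | rfl := hjr.lt_or_eq.imp_right Eq.symm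
    · exact ⟨eta r i r + eta r j (r - 1), .inl <| .inr ⟨i, j, hi, hij, hjr, rfl⟩,
        map_eta_top_add_eta hw1 hw2 hi (by omega) (by omega) hjr.le⟩
    · exact ⟨eta r i r, eta_mem hi hij.le le_rfl, map_eta_top hw1 hw2 hi hij.le⟩
  · exact ⟨eta r r r, eta_mem hr le_rfl le_rfl,
      by rw [map_eta_top hw1 hw2 hr le_rfl, two_smul]⟩
  · obtain ⟨hj, hjr⟩ := mem_Icc.mp (hY hjY)
    exact ⟨eta r j r + eta r j (r - 1), .inr ⟨j, hjY, rfl⟩,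
      by rw [map_eta_top_add_eta hw1 hw2 hj (by omega) hj (by omega), two_smul]⟩

end

theorem psi_image (r : ℕ) (hr : 3 ≤ r) (Y : Finset ℕ) (hY : Y ⊆ Finset.Icc 1 (r - 1))
    (w : (Fin r → ℤ) →ₗ[ℤ] (Fin r → ℤ))
    (hw1 : ∀ k, 1 ≤ k → k ≤ r - 1 → w (alphaV r k) = alphaV r k - alphaV r (k + 1))
    (hw2 : w (alphaV r r) = (2 : ℤ) • alphaV r r) :
    Set.BijOn w (Psi r Y)
      ({v | ∃ i j, 1 ≤ i ∧ i < j ∧ j ≤ r ∧ v = alphaV r i - alphaV r j} ∪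
       {v | ∃ i j, 1 ≤ i ∧ i < j ∧ j ≤ r ∧ v = alphaV r i + alphaV r j} ∪
       {(2 : ℤ) • alphaV r r} ∪
       {v | ∃ j ∈ Y, v = (2 : ℤ) • alphaV r j}) :=
  ⟨mapsTo_Psi_rootsC hY hw1 hw2, (injective_of_map_alphaV hw1 hw2).injOn,
    surjOn_Psi_rootsC (by omega) hY hw1 hw2⟩
end

section
/- Let σ_r : ℤ^r → ℤ^r be the linear map with σ_r(α_r) = -α_r, σ_r(α_{r-2}) = α_{r-2} + α_r, and σ_r(α_j) = α_j for all other j. If r-1 ∉ Z, then σ_r(Φ_{r,Z} ∪ -Φ_{r,Z}) = Φ_{r,Z} ∪ -Φ_{r,Z}. -/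
open Set Function

theorem Function.Involutive.image_eq_of_mapsTo {α : Type*} {f : α → α} (hf : Involutive f)
    {s : Set α} (h : MapsTo f s s) : f '' s = s :=
  h.image_subset.antisymm fun x hx => ⟨f x, h hx, hf x⟩

theorem Set.MapsTo.union_neg {F G : Type*} [AddGroup G] [FunLike F G G] [AddMonoidHomClass F G G]
    {f : F} {s : Set G} (h : MapsTo f s (s ∪ -s)) : MapsTo f (s ∪ -s) (s ∪ -s) := by
  refine h.union fun x hx => ?_
  have hfx : -f x ∈ s ∪ -s := by simpa only [map_neg, neg_neg] using h (mem_neg.mp hx)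
  rcases hfx with hfx | hfx
  · exact Or.inr (mem_neg.mpr hfx)
  · exact Or.inl (neg_mem_neg.mp hfx)

section eta

variable {r : ℕ}

theorem alphaV_succ (k : Fin r) : alphaV r (k + 1) = Pi.single k 1 := by
  funext l
  simp only [alphaV, Pi.single_apply, add_left_inj, Fin.val_inj]

theorem eta_of_lt {i m : ℕ} (h : m < i) : eta r i m = 0 := by
  funext k
  simp only [eta, Pi.zero_apply, ite_eq_right_iff, and_imp]
  omega

theorem eta_zero_right (i : ℕ) : eta r i 0 = 0 := by
  funext k
  simp only [eta, Pi.zero_apply, ite_eq_right_iff, and_imp]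
  omega

theorem eta_self (i : ℕ) : eta r i i = alphaV r i := by
  funext k
  simp only [eta, alphaV]
  split_ifs <;> omega

theorem eta_succ_right {i m : ℕ} (h : i ≤ m + 1) :
    eta r i (m + 1) = eta r i m + alphaV r (m + 1) := by
  funext k
  simp only [eta, alphaV, Pi.add_apply]
  split_ifs <;> omega

theorem eta_of_eq_succ {i m n : ℕ} (hn : n = m + 1) (hi : i ≤ n) :
    eta r i n = eta r i m + alphaV r n := by
  subst hn
  exact eta_succ_right hi

end eta

section Phi

variable {r : ℕ} {Z : Finset ℕ} {i j : ℕ}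

theorem eta_mem_Phi (hi : 1 ≤ i) (hij : i < j) (hj : j ≤ r) : eta r i (j - 1) ∈ Phi r Z :=
  Or.inl (Or.inl (Or.inl ⟨i, j, hi, hij, hj, rfl⟩))

theorem eta_add_alphaV_mem_Phi (hi : 1 ≤ i) (hir : i < r) :
    eta r i (r - 2) + alphaV r r ∈ Phi r Z :=
  Or.inl (Or.inl (Or.inr ⟨i, hi, hir, rfl⟩))

theorem eta_add_eta_mem_Phi (hi : 1 ≤ i) (hij : i < j) (hj : j < r) :
    eta r i r + eta r j (r - 2) ∈ Phi r Z :=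
  Or.inl (Or.inr ⟨i, j, hi, hij, hj, rfl⟩)

theorem eta_add_eta_self_mem_Phi (hj : j ∈ Z) : eta r j r + eta r j (r - 2) ∈ Phi r Z :=
  Or.inr ⟨j, hj, rfl⟩

end Phi

section sigma

variable {r : ℕ} (hr : 4 ≤ r) {σ : (Fin r → ℤ) →ₗ[ℤ] (Fin r → ℤ)}
  (h1 : σ (alphaV r r) = -alphaV r r)
  (h2 : σ (alphaV r (r - 2)) = alphaV r (r - 2) + alphaV r r)
  (h3 : ∀ j, 1 ≤ j → j ≤ r → j ≠ r → j ≠ r - 2 → σ (alphaV r j) = alphaV r j)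

include h1 h2 h3 in
theorem involutive_of_map_alphaV : Involutive σ := by
  have hσσ : σ.comp σ = LinearMap.id := by
    refine (Pi.basisFun ℤ (Fin r)).ext fun k => ?_
    have hk : (k : ℕ) < r := k.2
    rw [Pi.basisFun_apply, ← alphaV_succ, LinearMap.comp_apply, LinearMap.id_apply]
    by_cases hkr : (k : ℕ) + 1 = r
    · rw [hkr, h1, map_neg, h1, neg_neg]
    by_cases hkr2 : (k : ℕ) + 1 = r - 2
    · rw [hkr2, h2, map_add, h2, h1, add_neg_cancel_right]
    rw [h3 _ (by omega) (by omega) hkr hkr2, h3 _ (by omega) (by omega) hkr hkr2]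
  exact fun v => LinearMap.congr_fun hσσ v

include hr h3 in
theorem map_eta_of_le_sub_three {m : ℕ} (hm : m ≤ r - 3) (i : ℕ) :
    σ (eta r i m) = eta r i m := by
  induction m with
  | zero => rw [eta_zero_right, map_zero]
  | succ m ih =>
    by_cases hi : i ≤ m + 1
    · rw [eta_succ_right hi, map_add, ih (by omega),
        h3 (m + 1) (by omega) (by omega) (by omega) (by omega)]
    · rw [eta_of_lt (by omega), map_zero]

include hr h2 h3 in
theorem map_eta_sub_two {i : ℕ} (hi : i ≤ r - 2) :
    σ (eta r i (r - 2)) = eta r i (r - 2) + alphaV r r := by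
  rw [eta_of_eq_succ (m := r - 3) (by omega) hi, map_add,
    map_eta_of_le_sub_three hr h3 le_rfl, h2, add_assoc]

include hr h2 h3 in
theorem map_eta_sub_one {i : ℕ} (hi : i ≤ r - 2) :
    σ (eta r i (r - 1)) = eta r i (r - 1) + alphaV r r := by
  rw [eta_of_eq_succ (m := r - 2) (by omega) (by omega), map_add, map_eta_sub_two hr h2 h3 hi,
    h3 (r - 1) (by omega) (by omega) (by omega) (by omega), add_right_comm]

include hr h1 h2 h3 in
theorem map_eta_right {i : ℕ} (hi : i ≤ r - 2) : σ (eta r i r) = eta r i (r - 1) := by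
  rw [eta_of_eq_succ (m := r - 1) (by omega) (by omega), map_add, map_eta_sub_one hr h2 h3 hi, h1,
    add_neg_cancel_right]

include hr h1 h2 h3 in
theorem map_eta_add_eta_of_le {i j : ℕ} (hi : i ≤ r - 2) (hj : j ≤ r - 2) :
    σ (eta r i r + eta r j (r - 2)) = eta r i r + eta r j (r - 2) := by
  rw [map_add, map_eta_right hr h1 h2 h3 hi, map_eta_sub_two hr h2 h3 hj,
    eta_of_eq_succ (m := r - 1) (n := r) (by omega) (by omega)]
  abel

variable {Z : Finset ℕ} {i j : ℕ}

include hr h2 h3 in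
theorem map_eta_mem (hi : 1 ≤ i) (hij : i < j) (hj : j ≤ r) :
    σ (eta r i (j - 1)) ∈ Phi r Z ∪ -Phi r Z := by
  left
  by_cases hjr3 : j - 1 ≤ r - 3
  · rw [map_eta_of_le_sub_three hr h3 hjr3]
    exact eta_mem_Phi hi hij hj
  by_cases hjr1 : j = r - 1
  · rw [show j - 1 = r - 2 by omega, map_eta_sub_two hr h2 h3 (by omega)]
    exact eta_add_alphaV_mem_Phi hi (by omega)
  rw [show j - 1 = r - 1 by omega]
  by_cases hi2 : i ≤ r - 2
  · have hC : eta r i (r - 1) + alphaV r r = eta r i r + eta r (r - 1) (r - 2) := by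
      rw [eta_of_lt (by omega : r - 2 < r - 1), add_zero,
        eta_of_eq_succ (m := r - 1) (n := r) (by omega) (by omega)]
    rw [map_eta_sub_one hr h2 h3 hi2, hC]
    exact eta_add_eta_mem_Phi hi (by omega) (by omega)
  · have hfix : σ (eta r (r - 1) (r - 1)) = eta r (r - 1) (r - 1) := by
      rw [eta_self, h3 (r - 1) (by omega) (by omega) (by omega) (by omega)]
    rw [show i = r - 1 by omega, hfix]
    exact eta_mem_Phi (j := r) (by omega) (by omega) le_rfl

include hr h1 h2 h3 in
theorem map_eta_add_alphaV_mem (hi : 1 ≤ i) (hir : i < r) :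
    σ (eta r i (r - 2) + alphaV r r) ∈ Phi r Z ∪ -Phi r Z := by
  by_cases hi2 : i ≤ r - 2
  · left
    rw [map_add, map_eta_sub_two hr h2 h3 hi2, h1, add_neg_cancel_right,
      show r - 2 = r - 1 - 1 by omega]
    exact eta_mem_Phi hi (by omega) (by omega)
  · have hzero : eta r i (r - 2) = 0 := eta_of_lt (by omega)
    have hα : alphaV r r ∈ Phi r Z := by
      simpa only [hzero, zero_add] using eta_add_alphaV_mem_Phi (Z := Z) hi hir
    rw [hzero, zero_add, h1]
    exact Or.inr (neg_mem_neg.mpr hα)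

include hr h1 h2 h3 in
theorem map_eta_add_eta_mem (hi : 1 ≤ i) (hij : i < j) (hj : j < r) :
    σ (eta r i r + eta r j (r - 2)) ∈ Phi r Z ∪ -Phi r Z := by
  left
  by_cases hj2 : j ≤ r - 2
  · rw [map_eta_add_eta_of_le hr h1 h2 h3 (by omega) hj2]
    exact eta_add_eta_mem_Phi hi hij hj
  · rw [eta_of_lt (i := j) (m := r - 2) (by omega), add_zero, map_eta_right hr h1 h2 h3 (by omega)]
    exact eta_mem_Phi hi (by omega) le_rfl

include hr h1 h2 h3 in
theorem mapsTo_Phi (hZ : Z ⊆ Finset.Icc 1 (r - 1)) (hZ' : r - 1 ∉ Z) :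
    MapsTo σ (Phi r Z) (Phi r Z ∪ -Phi r Z) := by
  rintro v (((⟨i, j, hi, hij, hj, rfl⟩ | ⟨i, hi, hir, rfl⟩) | ⟨i, j, hi, hij, hj, rfl⟩) |
    ⟨j, hjZ, rfl⟩)
  · exact map_eta_mem hr h2 h3 hi hij hj
  · exact map_eta_add_alphaV_mem hr h1 h2 h3 hi hir
  · exact map_eta_add_eta_mem hr h1 h2 h3 hi hij hj
  · have hj2 : j ≤ r - 2 := by
      have hj := (Finset.mem_Icc.mp (hZ hjZ)).2
      have hj' := ne_of_mem_of_not_mem hjZ hZ'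
      omega
    rw [map_eta_add_eta_of_le hr h1 h2 h3 hj2 hj2]
    exact Or.inl (eta_add_eta_self_mem_Phi hjZ)

end sigma

theorem sigma_r_phi (r : ℕ) (hr : 4 ≤ r) (Z : Finset ℕ) (hZ : Z ⊆ Finset.Icc 1 (r - 1))
    (hZ' : r - 1 ∉ Z)
    (σ : (Fin r → ℤ) →ₗ[ℤ] (Fin r → ℤ))
    (h1 : σ (alphaV r r) = -alphaV r r)
    (h2 : σ (alphaV r (r - 2)) = alphaV r (r - 2) + alphaV r r)
    (h3 : ∀ j, 1 ≤ j → j ≤ r → j ≠ r → j ≠ r - 2 → σ (alphaV r j) = alphaV r j) :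
    σ '' (Phi r Z ∪ -Phi r Z) = Phi r Z ∪ -Phi r Z :=
  (involutive_of_map_alphaV h1 h2 h3).image_eq_of_mapsTo (mapsTo_Phi hr h1 h2 h3 hZ hZ').union_neg
end
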